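/- arXiv:2005.12153 — 5 statements merged into one kernel-verified Lean document; each statement's English description precedes it below -/
import Mathlib

section
/- For any two-state mean field game, the cost coefficients are always potential: given continuous functions f^1, f^2 : S_2 → R, the function F(p_1, 1−p_1) := ∫_0^{p_1} (f^1(q,1−q) − f^2(q,1−q)) dq satisfies 𝔡_1 F(p) = (f^1(p) − f^2(p))/2 = −𝔡_2 F(p) for all p = (p_1, p_2) in the interior of S_2. -/
open Set MeasureTheory intervalIntegral

/-! `F` depends on `p₁` only and is a primitive, in `p₁`, of `f¹ - f²` restricted to the segment
`q ↦ (q, 1 - q)`. Both intrinsic derivatives move `p₁` at speed `± 1/2` along that segment, so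
the fundamental theorem of calculus and the chain rule give the claim. -/

def simplexTwo : Set (ℝ × ℝ) := {p | 0 ≤ p.1 ∧ 0 ≤ p.2 ∧ p.1 + p.2 = 1}

theorem ContinuousOn.hasDerivAt_integral_of_mem_Ioo {E : Type*} [NormedAddCommGroup E]
    [NormedSpace ℝ E] [CompleteSpace E] {g : ℝ → E} {a b x : ℝ}
    (hg : ContinuousOn g (Icc a b)) (hx : x ∈ Ioo a b) :
    HasDerivAt (fun u => ∫ s in a..u, g s) (g x) x := by
  have hax : uIcc a x ⊆ Icc a b := by
    rw [uIcc_of_le hx.1.le]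
    exact Icc_subset_Icc_right hx.2.le
  exact integral_hasDerivAt_right ((hg.mono hax).intervalIntegrable)
    ((hg.mono Ioo_subset_Icc_self).stronglyMeasurableAtFilter isOpen_Ioo x hx)
    (hg.continuousAt (Icc_mem_nhds hx.1 hx.2))

theorem mapsTo_Icc_simplexTwo : MapsTo (fun s : ℝ => (s, 1 - s)) (Icc 0 1) simplexTwo :=
  fun s hs => ⟨hs.1, sub_nonneg.mpr hs.2, add_sub_cancel s 1⟩

theorem ContinuousOn.comp_simplexTwo_segment {f : ℝ × ℝ → ℝ} (hf : ContinuousOn f simplexTwo) :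
    ContinuousOn (fun s => f (s, 1 - s)) (Icc 0 1) :=
  hf.comp (by fun_prop) mapsTo_Icc_simplexTwo

theorem HasDerivAt.comp_const_add_mul {Φ : ℝ → ℝ} {φ' x : ℝ} (hΦ : HasDerivAt Φ φ' x)
    (k : ℝ) : HasDerivAt (fun ε => Φ (x + ε * k)) (φ' * k) 0 :=
  HasDerivAt.comp 0 (by simpa using hΦ) ((hasDerivAt_mul_const k).const_add x)

/-- any two-state mean field game is potential.  Given continuous cost
coefficients `f¹, f²` on `S_2`, the potential
`F(p₁, 1−p₁) = ∫_0^{p₁} (f¹(q,1−q) − f²(q,1−q)) dq` satisfies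
`𝔡₁F(p) = (f¹(p) − f²(p))/2 = −𝔡₂F(p)` on the interior of `S_2`, where the intrinsic
derivatives are `𝔡₁F(p) = d/dε F(p₁+ε/2, p₂−ε/2)|_{ε=0}` and
`𝔡₂F(p) = d/dε F(p₁−ε/2, p₂+ε/2)|_{ε=0}`. -/
theorem two_state_mfg_is_potential
    (f1 f2 : ℝ × ℝ → ℝ)
    (hf1 : ContinuousOn f1 simplexTwo) (hf2 : ContinuousOn f2 simplexTwo)
    (F : ℝ × ℝ → ℝ)
    (hF : ∀ q : ℝ × ℝ, F q = ∫ s in (0:ℝ)..q.1, (f1 (s, 1 - s) - f2 (s, 1 - s)))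
    (p : ℝ × ℝ) (hp : p ∈ simplexTwo) (hp1 : 0 < p.1) (hp2 : 0 < p.2) :
    deriv (fun ε : ℝ => F (p.1 + ε / 2, p.2 - ε / 2)) 0 = (f1 p - f2 p) / 2
    ∧ deriv (fun ε : ℝ => F (p.1 - ε / 2, p.2 + ε / 2)) 0 = -((f1 p - f2 p) / 2) := by
  have hp_eq : (p.1, 1 - p.1) = p := Prod.ext rfl (by linarith [hp.2.2])
  have hΦ : HasDerivAt (fun u => ∫ s in (0:ℝ)..u, (f1 (s, 1 - s) - f2 (s, 1 - s)))
      (f1 p - f2 p) p.1 := by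
    rw [← hp_eq]
    exact (hf1.comp_simplexTwo_segment.sub hf2.comp_simplexTwo_segment)
      |>.hasDerivAt_integral_of_mem_Ioo ⟨hp1, by linarith [hp.2.2]⟩
  have hF_line (k : ℝ) :
      HasDerivAt (fun ε => F (p.1 + ε * k, p.2 - ε * k)) ((f1 p - f2 p) * k) 0 := by
    simpa only [hF] using hΦ.comp_const_add_mul k
  constructor
  · convert (hF_line 2⁻¹).deriv using 1
    · simp only [div_eq_mul_inv]
    · ring
  · convert (hF_line (-2⁻¹)).deriv using 1
    · simp only [div_eq_mul_inv, mul_neg, sub_neg_eq_add, ← sub_eq_add_neg]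
    · ring
end

section
/- Let q : [0,T] → R^d solve the Fokker–Planck ODE q̇_t^i = ∑_j q_t^j α_t^{j,i} with q_0 in the simplex S_d, where the measurable controls satisfy α_t^{i,j} ≥ 0 for i ≠ j, α_t^{i,i} = −∑_{j≠i} α_t^{i,j}, and |α_t^{i,j}| ≤ M for i ≠ j. Then q_t remains in S_d for all t ∈ [0,T], and moreover q_t^i ≥ q_0^i e^{−t M (d−1)} for every i and t. -/
open Set MeasureTheory intervalIntegral

/-!
Write `l = M (d - 1)`; it bounds the exit rates `-α t i i` and the column sums
`∑_{j ≠ i} α t j i`. Splitting the drift `(q ᵥ* α) i` into its diagonal and off-diagonal parts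
gives two lower bounds: `-c l` when `q i ≤ 0` and every coordinate is `≥ -c`, and `-l q i` when
`q ≥ 0`. A barrier argument compares `q i` with an exponential wherever `q i` lies below it:
with the first bound, `q t i > -ε e^{l t}` holds up to the first time some coordinate fails it,
hence everywhere, hence `q ≥ 0`; with the second, `q t i ≥ q 0 i e^{-l t}`. Mass is conserved
because every row of `α t` sums to zero.
-/

open Finset Matrix Real

theorem continuousOn_of_eq_add_integral {f g : ℝ → ℝ} {a b : ℝ}
    (hg : IntegrableOn g (Icc a b)) (hf : ∀ t ∈ Icc a b, f t = f a + ∫ s in a..t, g s) :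
    ContinuousOn f (Icc a b) := by
  rcases lt_or_ge b a with hba | hab
  · rw [Icc_eq_empty hba.not_ge]
    exact continuousOn_empty f
  have hprim := continuousOn_primitive_interval (μ := volume) (a := a) (b := b) (f := g)
    (by rwa [uIcc_of_le hab])
  rw [uIcc_of_le hab] at hprim
  exact (continuousOn_const.add hprim).congr hf

theorem le_of_eq_add_integral_of_deriv_le {f g φ φ' : ℝ → ℝ} {a b : ℝ} (hab : a ≤ b)
    (hg : IntegrableOn g (Icc a b)) (hf : ∀ t ∈ Icc a b, f t = f a + ∫ s in a..t, g s)
    (hφ : ContinuousOn φ (Icc a b)) (hφ' : ∀ x ∈ Ioo a b, HasDerivWithinAt φ (φ' x) (Ioi x) x)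
    (ha : φ a ≤ f a) (hφ'g : ∀ x ∈ Ioo a b, f x < φ x → φ' x ≤ g x) : φ b ≤ f b := by
  by_contra! hb
  set A := {s ∈ Icc a b | φ s ≤ f s}
  have hA : IsClosed A :=
    isClosed_Icc.isClosed_le hφ (continuousOn_of_eq_add_integral hg hf)
  have hAbdd : BddAbove A := ⟨b, fun s hs => hs.1.2⟩
  -- `σ` is the last time at which `φ ≤ f`; on `(σ, b)` the comparison of derivatives applies.
  obtain ⟨hσ, hφσ⟩ := hA.csSup_mem ⟨a, left_mem_Icc.2 hab, ha⟩ hAbdd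
  set σ := sSup A
  have hσb : σ < b := hσ.2.lt_of_ne fun h => hb.not_ge (h ▸ hφσ)
  have hσb' : Icc σ b ⊆ Icc a b := Icc_subset_Icc_left hσ.1
  have hbelow : ∀ x ∈ Ioo σ b, φ' x ≤ g x := fun x hx =>
    hφ'g x ⟨hσ.1.trans_lt hx.1, hx.2⟩ <| not_le.1 fun hle =>
      (le_csSup hAbdd ⟨⟨hσ.1.trans hx.1.le, hx.2.le⟩, hle⟩).not_gt hx.1
  have hcmp := sub_le_integral_of_hasDeriv_right_of_le hσb.le (hφ.mono hσb')
    (fun x hx => hφ' x ⟨hσ.1.trans_lt hx.1, hx.2⟩) (hg.mono_set hσb') hbelow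
  have hgi : ∀ t ∈ Icc a b, IntervalIntegrable g volume a t := fun t ht =>
    (intervalIntegrable_iff_integrableOn_Icc_of_le ht.1).2 (hg.mono_set (Icc_subset_Icc_right ht.2))
  have hincr : f b - f σ = ∫ s in σ..b, g s := by
    rw [hf b (right_mem_Icc.2 hab), hf σ hσ, ← integral_interval_sub_left
      (hgi b (right_mem_Icc.2 hab)) (hgi σ hσ)]
    ring
  linarith

theorem forall_mem_Icc_of_forall_Ico_imp {P : ℝ → Prop} {a b : ℝ}
    (hP : IsClosed {t ∈ Icc a b | ¬ P t}) (hstep : ∀ t ∈ Icc a b, (∀ s ∈ Ico a t, P s) → P t) :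
    ∀ t ∈ Icc a b, P t := by
  by_contra! ⟨t, ht, hPt⟩
  have hbdd : BddBelow {t ∈ Icc a b | ¬ P t} := ⟨a, fun s hs => hs.1.1⟩
  obtain ⟨hτ, hPτ⟩ := hP.csInf_mem ⟨t, ht, hPt⟩ hbdd
  refine hPτ (hstep _ hτ fun s hs => ?_)
  by_contra hPs
  exact (csInf_le hbdd ⟨⟨hs.1, hs.2.le.trans hτ.2⟩, hPs⟩).not_gt hs.2

theorem sum_erase_le_mul_card_sub_one {ι : Type*} [Fintype ι] [DecidableEq ι] {f : ι → ℝ}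
    {M : ℝ} (i : ι) (hf : ∀ j, j ≠ i → f j ≤ M) :
    ∑ j ∈ univ.erase i, f j ≤ M * (Fintype.card ι - 1) := by
  calc ∑ j ∈ univ.erase i, f j ≤ (univ.erase i).card • M :=
        sum_le_card_nsmul _ _ _ fun j hj => hf j (ne_of_mem_erase hj)
    _ = M * (Fintype.card ι - 1) := by
        rw [card_erase_of_mem (mem_univ i), card_univ, nsmul_eq_mul,
          Nat.cast_pred (Fintype.card_pos_iff.2 ⟨i⟩), mul_comm]

theorem Matrix.vecMul_apply_eq_add_sum_erase {ι R : Type*} [Fintype ι] [DecidableEq ι]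
    [NonUnitalNonAssocSemiring R] (x : ι → R) (A : Matrix ι ι R) (i : ι) :
    (x ᵥ* A) i = x i * A i i + ∑ j ∈ univ.erase i, x j * A j i :=
  (add_sum_erase _ _ (mem_univ i)).symm

/-- The generator of a continuous-time Markov chain on `ι` whose jump rates are at most `M`. -/
structure IsBoundedRateMatrix {ι : Type*} [Fintype ι] [DecidableEq ι] (M : ℝ)
    (A : Matrix ι ι ℝ) : Prop where
  nonneg : ∀ i j, i ≠ j → 0 ≤ A i j
  abs_le : ∀ i j, i ≠ j → |A i j| ≤ M
  diag : ∀ i, A i i = -∑ j ∈ univ.erase i, A i j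

namespace IsBoundedRateMatrix

variable {ι : Type*} [Fintype ι] [DecidableEq ι] {M : ℝ} {A : Matrix ι ι ℝ}

theorem le (hA : IsBoundedRateMatrix M A) {i j : ι} (hij : i ≠ j) : A i j ≤ M :=
  (_root_.abs_le.1 (hA.abs_le i j hij)).2

theorem diag_nonpos (hA : IsBoundedRateMatrix M A) (i : ι) : A i i ≤ 0 := by
  rw [hA.diag i, neg_nonpos]
  exact sum_nonneg fun j hj => hA.nonneg i j (ne_of_mem_erase hj).symm

theorem neg_le_diag (hA : IsBoundedRateMatrix M A) (i : ι) :
    -(M * (Fintype.card ι - 1)) ≤ A i i := by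
  rw [hA.diag i, neg_le_neg_iff]
  exact sum_erase_le_mul_card_sub_one i fun j hj => hA.le hj.symm

theorem abs_le_mul_card (hA : IsBoundedRateMatrix M A) (hM : 0 ≤ M) (i j : ι) :
    |A i j| ≤ M * Fintype.card ι := by
  rcases eq_or_ne i j with rfl | hij
  · rw [abs_of_nonpos (hA.diag_nonpos i)]
    linarith [hA.neg_le_diag i]
  · have hcard : (1 : ℝ) ≤ Fintype.card ι := by exact_mod_cast Fintype.card_pos_iff.2 ⟨i⟩
    exact (hA.abs_le i j hij).trans (le_mul_of_one_le_right hM hcard)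

theorem mulVec_one (hA : IsBoundedRateMatrix M A) : A *ᵥ 1 = 0 := by
  ext i
  simp only [mulVec, dotProduct, Pi.one_apply, mul_one, Pi.zero_apply]
  rw [← add_sum_erase _ _ (mem_univ i), hA.diag i, neg_add_cancel]

theorem sum_vecMul_apply (hA : IsBoundedRateMatrix M A) (x : ι → ℝ) : ∑ i, (x ᵥ* A) i = 0 := by
  rw [← dotProduct_one, ← dotProduct_mulVec, hA.mulVec_one, dotProduct_zero]

theorem neg_mul_le_vecMul_apply_of_nonpos (hA : IsBoundedRateMatrix M A) {x : ι → ℝ} {c : ℝ}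
    {i : ι} (hx : ∀ j, -c ≤ x j) (hxi : x i ≤ 0) :
    -(c * (M * (Fintype.card ι - 1))) ≤ (x ᵥ* A) i := by
  have hc : 0 ≤ c := by linarith [hx i]
  have hdiag : 0 ≤ x i * A i i := mul_nonneg_of_nonpos_of_nonpos hxi (hA.diag_nonpos i)
  have hoff : -(c * (M * (Fintype.card ι - 1))) ≤ ∑ j ∈ univ.erase i, x j * A j i :=
    calc -(c * (M * (Fintype.card ι - 1)))
        ≤ -(c * ∑ j ∈ univ.erase i, A j i) :=
          neg_le_neg <| mul_le_mul_of_nonneg_left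
            (sum_erase_le_mul_card_sub_one i fun j hj => hA.le hj) hc
      _ = ∑ j ∈ univ.erase i, -c * A j i := by simp only [neg_mul, sum_neg_distrib, mul_sum]
      _ ≤ ∑ j ∈ univ.erase i, x j * A j i := sum_le_sum fun j hj =>
          mul_le_mul_of_nonneg_right (hx j) (hA.nonneg j i (ne_of_mem_erase hj))
  rw [vecMul_apply_eq_add_sum_erase]
  linarith

theorem neg_mul_le_vecMul_apply_of_nonneg (hA : IsBoundedRateMatrix M A) {x : ι → ℝ}
    (hx : ∀ j, 0 ≤ x j) (i : ι) : -(M * (Fintype.card ι - 1) * x i) ≤ (x ᵥ* A) i := by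
  have hdiag := mul_le_mul_of_nonneg_left (hA.neg_le_diag i) (hx i)
  have hoff : 0 ≤ ∑ j ∈ univ.erase i, x j * A j i :=
    sum_nonneg fun j hj => mul_nonneg (hx j) (hA.nonneg j i (ne_of_mem_erase hj))
  rw [vecMul_apply_eq_add_sum_erase]
  linarith

end IsBoundedRateMatrix

theorem integrableOn_vecMul_apply {ι : Type*} [Fintype ι] {q : ℝ → ι → ℝ}
    {α : ℝ → Matrix ι ι ℝ} {a b C : ℝ} (hq : ContinuousOn q (Icc a b))
    (hmeas : ∀ i j, Measurable fun t => α t i j) (hbd : ∀ t ∈ Icc a b, ∀ i j, |α t i j| ≤ C)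
    (i : ι) : IntegrableOn (fun s => (q s ᵥ* α s) i) (Icc a b) := by
  refine integrable_finsetSum _ fun j _ => ?_
  have hα : IntegrableOn (fun t => α t j i) (Icc a b) :=
    Measure.integrableOn_of_bounded measure_Icc_lt_top.ne (hmeas j i).aestronglyMeasurable
      (ae_restrict_of_forall_mem measurableSet_Icc fun t ht => hbd t ht j i)
  exact hα.continuousOn_mul ((continuous_apply j).comp_continuousOn hq) isCompact_Icc

/-- The Fokker–Planck equation `q̇ = q α` on `[0, T]`, in integral form. -/
def IsFokkerPlanckSolution {ι : Type*} [Fintype ι] (T : ℝ) (α : ℝ → Matrix ι ι ℝ)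
    (q : ℝ → ι → ℝ) : Prop :=
  ∀ t ∈ Icc 0 T, ∀ i, q t i = q 0 i + ∫ s in (0 : ℝ)..t, (q s ᵥ* α s) i

namespace IsFokkerPlanckSolution

variable {ι : Type*} [Fintype ι] [DecidableEq ι] {T M : ℝ} {α : ℝ → Matrix ι ι ℝ}
  {q : ℝ → ι → ℝ}

theorem neg_mul_exp_lt (hq : IsFokkerPlanckSolution T α q) (hM : 0 ≤ M)
    (hα : ∀ t ∈ Icc 0 T, IsBoundedRateMatrix M (α t))
    (hint : ∀ i, IntegrableOn (fun s => (q s ᵥ* α s) i) (Icc 0 T)) (hq0 : ∀ i, 0 ≤ q 0 i)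
    {ε : ℝ} (hε : 0 < ε) :
    ∀ t ∈ Icc 0 T, ∀ i, -(ε * exp (M * (Fintype.card ι - 1) * t)) < q t i := by
  set l := M * ((Fintype.card ι : ℝ) - 1)
  refine forall_mem_Icc_of_forall_Ico_imp ?_ fun τ hτ hbefore i => ?_
  · have hset : {t ∈ Icc 0 T | ¬ ∀ i, -(ε * exp (l * t)) < q t i}
        = ⋃ i, {t ∈ Icc 0 T | q t i ≤ -(ε * exp (l * t))} := by
      ext t
      simp
    rw [hset]
    refine isClosed_iUnion_of_finite fun i => isClosed_Icc.isClosed_le ?_ (by fun_prop)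
    exact continuousOn_of_eq_add_integral (hint i) fun t ht => hq t ht i
  have hl : 0 ≤ l := mul_nonneg hM (sub_nonneg.2 (by exact_mod_cast Fintype.card_pos_iff.2 ⟨i⟩))
  have hsub : Icc 0 τ ⊆ Icc 0 T := Icc_subset_Icc_right hτ.2
  -- The barrier `ε (1 - e^{l s})` is `≤ 0`, so below it `q i ≤ 0` and the first drift bound
  -- applies.
  have hφ : ∀ x, HasDerivAt (fun s => ε * (1 - exp (l * s))) (-(ε * exp (l * x) * l)) x :=
    fun x => ((((hasDerivAt_id' x).const_mul l).exp.const_sub 1).const_mul ε).congr_deriv (by ring)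
  have hdrift : ∀ x ∈ Ioo 0 τ, q x i < ε * (1 - exp (l * x)) →
      -(ε * exp (l * x) * l) ≤ (q x ᵥ* α x) i := by
    intro x hx hlt
    have hqx : q x i ≤ 0 := hlt.le.trans <| mul_nonpos_of_nonneg_of_nonpos hε.le <|
      sub_nonpos.2 (one_le_exp (mul_nonneg hl hx.1.le))
    have := (hα x (hsub (Ioo_subset_Icc_self hx))).neg_mul_le_vecMul_apply_of_nonpos
      (fun j => (hbefore x ⟨hx.1.le, hx.2⟩ j).le) hqx
    linarith
  have hle := le_of_eq_add_integral_of_deriv_le hτ.1 ((hint i).mono_set hsub)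
    (fun t ht => hq t (hsub ht) i) (Continuous.continuousOn (by fun_prop))
    (fun x _ => (hφ x).hasDerivWithinAt) (by simpa using hq0 i) hdrift
  linarith [exp_pos (l * τ)]

theorem nonneg (hq : IsFokkerPlanckSolution T α q) (hM : 0 ≤ M)
    (hα : ∀ t ∈ Icc 0 T, IsBoundedRateMatrix M (α t))
    (hint : ∀ i, IntegrableOn (fun s => (q s ᵥ* α s) i) (Icc 0 T)) (hq0 : ∀ i, 0 ≤ q 0 i) :
    ∀ t ∈ Icc 0 T, ∀ i, 0 ≤ q t i := by
  intro t ht i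
  refine le_of_forall_pos_lt_add fun ε hε => ?_
  have hexp := exp_pos (M * (Fintype.card ι - 1) * t)
  have := hq.neg_mul_exp_lt hM hα hint hq0 (div_pos hε hexp) t ht i
  rw [div_mul_cancel₀ _ hexp.ne'] at this
  linarith

theorem mul_exp_le (hq : IsFokkerPlanckSolution T α q) (hM : 0 ≤ M)
    (hα : ∀ t ∈ Icc 0 T, IsBoundedRateMatrix M (α t))
    (hint : ∀ i, IntegrableOn (fun s => (q s ᵥ* α s) i) (Icc 0 T))
    (hnonneg : ∀ t ∈ Icc 0 T, ∀ i, 0 ≤ q t i) :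
    ∀ t ∈ Icc 0 T, ∀ i, q 0 i * exp (-(M * (Fintype.card ι - 1) * t)) ≤ q t i := by
  intro t ht i
  set l := M * ((Fintype.card ι : ℝ) - 1)
  have hl : 0 ≤ l := mul_nonneg hM (sub_nonneg.2 (by exact_mod_cast Fintype.card_pos_iff.2 ⟨i⟩))
  have hsub : Icc 0 t ⊆ Icc 0 T := Icc_subset_Icc_right ht.2
  have hφ : ∀ x,
      HasDerivAt (fun s => q 0 i * exp (-(l * s))) (-(l * (q 0 i * exp (-(l * x))))) x :=
    fun x => ((((hasDerivAt_id' x).const_mul l).neg.exp).const_mul (q 0 i)).congr_deriv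
      (by rw [Pi.neg_apply]; ring)
  have hdrift : ∀ x ∈ Ioo 0 t, q x i < q 0 i * exp (-(l * x)) →
      -(l * (q 0 i * exp (-(l * x)))) ≤ (q x ᵥ* α x) i := by
    intro x hx hlt
    have hx' := hsub (Ioo_subset_Icc_self hx)
    have := (hα x hx').neg_mul_le_vecMul_apply_of_nonneg (hnonneg x hx') i
    linarith [mul_le_mul_of_nonneg_left hlt.le hl]
  exact le_of_eq_add_integral_of_deriv_le ht.1 ((hint i).mono_set hsub)
    (fun s hs => hq s (hsub hs) i) (Continuous.continuousOn (by fun_prop))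
    (fun x _ => (hφ x).hasDerivWithinAt) (by simp) hdrift

theorem sum_eq (hq : IsFokkerPlanckSolution T α q) (hα : ∀ t ∈ Icc 0 T, IsBoundedRateMatrix M (α t))
    (hint : ∀ i, IntegrableOn (fun s => (q s ᵥ* α s) i) (Icc 0 T)) :
    ∀ t ∈ Icc 0 T, ∑ i, q t i = ∑ i, q 0 i := by
  intro t ht
  have hsub : uIcc 0 t ⊆ Icc 0 T := by
    rw [uIcc_of_le ht.1]
    exact Icc_subset_Icc_right ht.2
  calc ∑ i, q t i = ∑ i, q 0 i + ∫ s in (0 : ℝ)..t, ∑ i, (q s ᵥ* α s) i := by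
        rw [integral_finsetSum fun i _ => ((hint i).mono_set hsub).intervalIntegrable,
          ← sum_add_distrib]
        exact sum_congr rfl fun i _ => hq t ht i
    _ = ∑ i, q 0 i := by
        rw [integral_congr (g := fun _ => 0) fun s hs => (hα s (hsub hs)).sum_vecMul_apply _]
        simp

end IsFokkerPlanckSolution

theorem fokker_planck_stays_in_simplex_general
    (d : ℕ) (T : ℝ) (M : ℝ) (hM : 0 ≤ M)
    (q : ℝ → Fin d → ℝ) (α : ℝ → Fin d → Fin d → ℝ)
    (hαmeas : ∀ i j, Measurable (fun t => α t i j))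
    (hαpos : ∀ t ∈ Set.Icc (0:ℝ) T, ∀ i j, i ≠ j → 0 ≤ α t i j)
    (hαbd : ∀ t ∈ Set.Icc (0:ℝ) T, ∀ i j, i ≠ j → |α t i j| ≤ M)
    (hαdiag : ∀ t ∈ Set.Icc (0:ℝ) T, ∀ i, α t i i = -∑ j ∈ Finset.univ.erase i, α t i j)
    (hq0pos : ∀ i, 0 ≤ q 0 i) (hq0sum : ∑ i, q 0 i = 1)
    (hqcont : ContinuousOn q (Set.Icc (0:ℝ) T))
    (heq : ∀ t ∈ Set.Icc (0:ℝ) T, ∀ i,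
      q t i = q 0 i + ∫ s in (0:ℝ)..t, ∑ j, q s j * α s j i) :
    ∀ t ∈ Set.Icc (0:ℝ) T,
      (∀ i, 0 ≤ q t i) ∧ (∑ i, q t i = 1) ∧
      (∀ i, q 0 i * Real.exp (-(t * M * ((d : ℝ) - 1))) ≤ q t i) := by
  have hα : ∀ t ∈ Icc 0 T, IsBoundedRateMatrix M (α t) := fun t ht =>
    ⟨hαpos t ht, hαbd t ht, hαdiag t ht⟩
  have hint : ∀ i, IntegrableOn (fun s => (q s ᵥ* α s) i) (Icc 0 T) :=
    integrableOn_vecMul_apply hqcont hαmeas fun t ht => (hα t ht).abs_le_mul_card hM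
  have hsol : IsFokkerPlanckSolution T α q := heq
  have hnonneg := hsol.nonneg hM hα hint hq0pos
  intro t ht
  refine ⟨hnonneg t ht, by rw [hsol.sum_eq hα hint t ht, hq0sum], fun i => ?_⟩
  convert hsol.mul_exp_le hM hα hint hnonneg t ht i using 4
  rw [Fintype.card_fin]
  ring

/-- solutions of the Fokker–Planck ODE `q̇ᵗⁱ = ∑ⱼ qᵗʲ αᵗʲⁱ` (in integral form),
driven by bounded measurable Markovian controls (`α^{i,j} ≥ 0` for `i ≠ j`,
`α^{i,i} = −∑_{j≠i} α^{i,j}`, `|α^{i,j}| ≤ M` for `i ≠ j`), starting in the simplex,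
remain in the simplex on `[0,T]` and satisfy the lower bound
`q_t^i ≥ q_0^i e^{−t M (d−1)}`. -/
theorem fokker_planck_stays_in_simplex
    (d : ℕ) (hd : 2 ≤ d) (T : ℝ) (hT : 0 < T) (M : ℝ) (hM : 0 ≤ M)
    (q : ℝ → Fin d → ℝ) (α : ℝ → Fin d → Fin d → ℝ)
    (hαmeas : ∀ i j, Measurable (fun t => α t i j))
    (hαpos : ∀ t ∈ Set.Icc (0:ℝ) T, ∀ i j, i ≠ j → 0 ≤ α t i j)
    (hαbd : ∀ t ∈ Set.Icc (0:ℝ) T, ∀ i j, i ≠ j → |α t i j| ≤ M)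
    (hαdiag : ∀ t ∈ Set.Icc (0:ℝ) T, ∀ i, α t i i = -∑ j ∈ Finset.univ.erase i, α t i j)
    (hq0pos : ∀ i, 0 ≤ q 0 i) (hq0sum : ∑ i, q 0 i = 1)
    (hqcont : ContinuousOn q (Set.Icc (0:ℝ) T))
    (heq : ∀ t ∈ Set.Icc (0:ℝ) T, ∀ i,
      q t i = q 0 i + ∫ s in (0:ℝ)..t, ∑ j, q s j * α s j i) :
    ∀ t ∈ Set.Icc (0:ℝ) T,
      (∀ i, 0 ≤ q t i) ∧ (∑ i, q t i = 1) ∧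
      (∀ i, q 0 i * Real.exp (-(t * M * ((d : ℝ) - 1))) ≤ q t i) :=
  fokker_planck_stays_in_simplex_general d T M hM q α hαmeas hαpos hαbd hαdiag hq0pos hq0sum hqcont
    heq
end

section
/- With the Hamiltonian Ĥ^i(z) := −(1/2)(∑_{j≠i, j≤d−1} ((z_i − z_j)_+)^2 + (z_i)_+^2) for i ≤ d−1 and Ĥ^d(z) := −(1/2)∑_{j≤d−1} ((−z_j)_+)^2, the function 𝓗(x,z) = ∑_{i=1}^{d−1} x_i Ĥ^i(z) + (1 − ∑_{i=1}^{d−1} x_i) Ĥ^d(z) is strictly concave in z ∈ R^{d−1} for every x in the interior of the closed set Ŝ_d = {x ∈ (R_+)^{d−1} : ∑ x_i ≤ 1}. -/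
open Set

noncomputable section

/-- The Hamiltonian `Ĥ^i(z) = −(1/2)(∑_{j≠i,j≤d−1}((z_i−z_j)₊)² + (z_i)₊²)` for
`i ≤ d−1` (here `n = d−1`). -/
def hamHatI (n : ℕ) (i : Fin n) (z : Fin n → ℝ) : ℝ :=
  -(1 / 2) * ((∑ j ∈ Finset.univ.erase i, max (z i - z j) 0 ^ 2) + max (z i) 0 ^ 2)

/-- The Hamiltonian `Ĥ^d(z) = −(1/2)∑_{j≤d−1}((−z_j)₊)²`. -/
def hamHatD (n : ℕ) (z : Fin n → ℝ) : ℝ :=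
  -(1 / 2) * ∑ j, max (-z j) 0 ^ 2

/-- `𝓗(x,z) = ∑_{i≤d−1} x_i Ĥ^i(z) + (1 − ∑ x_i) Ĥ^d(z)` in local coordinates. -/
def hamCal (n : ℕ) (x z : Fin n → ℝ) : ℝ :=
  (∑ i, x i * hamHatI n i z) + (1 - ∑ i, x i) * hamHatD n z

private lemma lemA (u v a b : ℝ) (ha : 0 ≤ a) (hb : 0 ≤ b) (hab : a + b = 1) :
    max (a * u + b * v) 0 ^ 2 ≤ a * max u 0 ^ 2 + b * max v 0 ^ 2 := by
  have hU := le_max_left u 0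
  have hU0 := le_max_right u 0
  have hV := le_max_left v 0
  have hV0 := le_max_right v 0
  have h1 : max (a * u + b * v) 0 ≤ a * max u 0 + b * max v 0 := by
    apply max_le
    · nlinarith
    · nlinarith
  have h0 : (0:ℝ) ≤ max (a * u + b * v) 0 := le_max_right _ _
  nlinarith [mul_self_le_mul_self h0 h1, sq_nonneg (max u 0 - max v 0),
    mul_nonneg (mul_nonneg ha hb) (sq_nonneg (max u 0 - max v 0))]

private lemma lemB (c d u v a b : ℝ) (hc : 0 < c) (hd : 0 < d) (huv : u ≠ v)
    (ha : 0 < a) (hb : 0 < b) (hab : a + b = 1) :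
    c * max (a*u+b*v) 0 ^ 2 + d * max (-(a*u+b*v)) 0 ^ 2
      < a * (c * max u 0 ^ 2 + d * max (-u) 0 ^ 2)
        + b * (c * max v 0 ^ 2 + d * max (-v) 0 ^ 2) := by
  have hba : b = 1 - a := by linarith
  subst hba
  have huv2 : 0 < (u - v) ^ 2 :=
    (sq_nonneg _).lt_of_ne' (pow_ne_zero 2 (sub_ne_zero.mpr huv))
  rcases le_or_gt u 0 with hu | hu <;> rcases le_or_gt v 0 with hv | hv <;>
    rcases le_or_gt (a*u+(1-a)*v) 0 with hm | hm
  · rw [max_eq_right hu, max_eq_right hv, max_eq_right hm,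
      max_eq_left (by linarith : (0:ℝ) ≤ -u), max_eq_left (by linarith : (0:ℝ) ≤ -v),
      max_eq_left (by linarith : (0:ℝ) ≤ -(a*u+(1-a)*v))]
    nlinarith [mul_pos hd (mul_pos (mul_pos ha hb) huv2)]
  · exfalso
    nlinarith [mul_nonneg ha.le (neg_nonneg.2 hu), mul_nonneg hb.le (neg_nonneg.2 hv)]
  · rw [max_eq_right hu, max_eq_left hv.le, max_eq_right hm,
      max_eq_left (by linarith : (0:ℝ) ≤ -u), max_eq_right (by linarith : -v ≤ (0:ℝ)),
      max_eq_left (by linarith : (0:ℝ) ≤ -(a*u+(1-a)*v))]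
    have hau : a*u ≤ 0 := mul_nonpos_of_nonneg_of_nonpos ha.le hu
    have h3 : a*u ≤ a*u+(1-a)*v := by nlinarith [mul_pos hb hv]
    have h4 : (a*u+(1-a)*v)^2 ≤ (a*u)^2 := by
      nlinarith [mul_nonneg (neg_nonneg.2 hm) (sub_nonneg.2 h3),
        mul_nonneg (neg_nonneg.2 hau) (sub_nonneg.2 h3)]
    nlinarith [mul_le_mul_of_nonneg_left h4 hd.le,
      mul_pos hb (mul_pos hc (mul_pos hv hv)),
      mul_nonneg (mul_nonneg hd.le (mul_nonneg ha.le hb.le)) (sq_nonneg u)]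
  · rw [max_eq_right hu, max_eq_left hv.le, max_eq_left hm.le,
      max_eq_left (by linarith : (0:ℝ) ≤ -u), max_eq_right (by linarith : -v ≤ (0:ℝ)),
      max_eq_right (by linarith : -(a*u+(1-a)*v) ≤ (0:ℝ))]
    have hau : a*u ≤ 0 := mul_nonpos_of_nonneg_of_nonpos ha.le hu
    have h3 : a*u+(1-a)*v ≤ (1-a)*v := by linarith
    have h4 : (a*u+(1-a)*v)^2 ≤ ((1-a)*v)^2 := by
      nlinarith [mul_nonneg hm.le (sub_nonneg.2 h3),
        mul_nonneg (mul_nonneg hb.le hv.le) (sub_nonneg.2 h3)]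
    nlinarith [mul_le_mul_of_nonneg_left h4 hc.le,
      mul_pos (mul_pos ha hc) (mul_pos hb (mul_pos hv hv)),
      mul_nonneg (mul_nonneg hd.le ha.le) (sq_nonneg u)]
  · rw [max_eq_left hu.le, max_eq_right hv, max_eq_right hm,
      max_eq_right (by linarith : -u ≤ (0:ℝ)), max_eq_left (by linarith : (0:ℝ) ≤ -v),
      max_eq_left (by linarith : (0:ℝ) ≤ -(a*u+(1-a)*v))]
    have hbv : (1-a)*v ≤ 0 := mul_nonpos_of_nonneg_of_nonpos hb.le hv
    have h3 : (1-a)*v ≤ a*u+(1-a)*v := by nlinarith [mul_pos ha hu]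
    have h4 : (a*u+(1-a)*v)^2 ≤ ((1-a)*v)^2 := by
      nlinarith [mul_nonneg (neg_nonneg.2 hm) (sub_nonneg.2 h3),
        mul_nonneg (neg_nonneg.2 hbv) (sub_nonneg.2 h3)]
    nlinarith [mul_le_mul_of_nonneg_left h4 hd.le,
      mul_pos (mul_pos ha hc) (mul_pos hu hu),
      mul_nonneg (mul_nonneg hd.le (mul_nonneg ha.le hb.le)) (sq_nonneg v)]
  · rw [max_eq_left hu.le, max_eq_right hv, max_eq_left hm.le,
      max_eq_right (by linarith : -u ≤ (0:ℝ)), max_eq_left (by linarith : (0:ℝ) ≤ -v),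
      max_eq_right (by linarith : -(a*u+(1-a)*v) ≤ (0:ℝ))]
    have hbv : (1-a)*v ≤ 0 := mul_nonpos_of_nonneg_of_nonpos hb.le hv
    have h3 : a*u+(1-a)*v ≤ a*u := by linarith
    have h4 : (a*u+(1-a)*v)^2 ≤ (a*u)^2 := by
      nlinarith [mul_nonneg hm.le (sub_nonneg.2 h3),
        mul_nonneg (mul_nonneg ha.le hu.le) (sub_nonneg.2 h3)]
    nlinarith [mul_le_mul_of_nonneg_left h4 hc.le,
      mul_pos (mul_pos ha hb) (mul_pos hc (mul_pos hu hu)),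
      mul_nonneg (mul_nonneg hd.le hb.le) (sq_nonneg v)]
  · exfalso
    nlinarith [mul_pos ha hu, mul_pos hb hv]
  · rw [max_eq_left hu.le, max_eq_left hv.le, max_eq_left hm.le,
      max_eq_right (by linarith : -u ≤ (0:ℝ)), max_eq_right (by linarith : -v ≤ (0:ℝ)),
      max_eq_right (by linarith : -(a*u+(1-a)*v) ≤ (0:ℝ))]
    nlinarith [mul_pos hc (mul_pos (mul_pos ha hb) huv2)]

private lemma sum_rearrange (m : ℕ) (f g h k : Fin m → ℝ) (c : ℝ) :
    (∑ i, f i * (-(1/2) * (g i + h i))) + c * (-(1/2) * ∑ i, k i)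
      = -(1/2) * ((∑ i, f i * g i) + ∑ i, (f i * h i + c * k i)) := by
  have l1 : c * (-(1/2) * ∑ i, k i) = ∑ i, c * (-(1/2) * k i) := by
    rw [Finset.mul_sum, Finset.mul_sum]
  have r1 : -(1/2) * ((∑ i, f i * g i) + ∑ i, (f i * h i + c * k i))
      = ∑ i, (-(1/2)) * (f i * g i + (f i * h i + c * k i)) := by
    rw [← Finset.sum_add_distrib, Finset.mul_sum]
  rw [l1, r1, ← Finset.sum_add_distrib]
  exact Finset.sum_congr rfl fun i _ => by ring

/-- for every `x` in the interior of `Ŝ_d` (all `x_i > 0`, `∑ x_i < 1`),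
the Hamiltonian `z ↦ 𝓗(x,z)` is strictly concave on `ℝ^{d−1}`.  Here `n = d−1 ≥ 1`,
i.e. `d ≥ 2`. -/
theorem hamiltonian_strictly_concave
    (n : ℕ) (hn : 1 ≤ n) (x : Fin n → ℝ)
    (hx : ∀ i, 0 < x i) (hxs : ∑ i, x i < 1) :
    StrictConcaveOn ℝ Set.univ (fun z : Fin n → ℝ => hamCal n x z) := by
  refine ⟨convex_univ, fun p _ q _ hpq a b ha hb hab => ?_⟩
  show a * hamCal n x p + b * hamCal n x q < hamCal n x (a • p + b • q)
  have hS1 : 0 < 1 - ∑ i, x i := by linarith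
  have hrep : ∀ z : Fin n → ℝ, hamCal n x z =
      -(1/2) * ((∑ i, x i * ∑ j ∈ Finset.univ.erase i, max (z i - z j) 0 ^ 2)
        + ∑ i, (x i * max (z i) 0 ^ 2 + (1 - ∑ i, x i) * max (-(z i)) 0 ^ 2)) := by
    intro z
    unfold hamCal hamHatI hamHatD
    exact sum_rearrange n x (fun i => ∑ j ∈ Finset.univ.erase i, max (z i - z j) 0 ^ 2)
      (fun i => max (z i) 0 ^ 2) (fun i => max (-(z i)) 0 ^ 2) (1 - ∑ i, x i)
  have hcross :
      ∑ i, x i * ∑ j ∈ Finset.univ.erase i,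
          max ((a • p + b • q) i - (a • p + b • q) j) 0 ^ 2
        ≤ a * ∑ i, x i * ∑ j ∈ Finset.univ.erase i, max (p i - p j) 0 ^ 2
          + b * ∑ i, x i * ∑ j ∈ Finset.univ.erase i, max (q i - q j) 0 ^ 2 := by
    rw [Finset.mul_sum, Finset.mul_sum, ← Finset.sum_add_distrib]
    refine Finset.sum_le_sum fun i _ => ?_
    have hi : ∑ j ∈ Finset.univ.erase i,
          max ((a • p + b • q) i - (a • p + b • q) j) 0 ^ 2
        ≤ a * (∑ j ∈ Finset.univ.erase i, max (p i - p j) 0 ^ 2)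
          + b * (∑ j ∈ Finset.univ.erase i, max (q i - q j) 0 ^ 2) := by
      rw [Finset.mul_sum, Finset.mul_sum, ← Finset.sum_add_distrib]
      refine Finset.sum_le_sum fun j _ => ?_
      have e : (a • p + b • q) i - (a • p + b • q) j
          = a * (p i - p j) + b * (q i - q j) := by
        simp only [Pi.add_apply, Pi.smul_apply, smul_eq_mul]; ring
      rw [e]
      exact lemA _ _ _ _ ha.le hb.le hab
    have := mul_le_mul_of_nonneg_left hi (hx i).le
    linarith
  obtain ⟨k, hk⟩ := Function.ne_iff.mp hpq
  have hg :
      ∑ i, (x i * max ((a • p + b • q) i) 0 ^ 2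
          + (1 - ∑ i, x i) * max (-((a • p + b • q) i)) 0 ^ 2)
        < a * ∑ i, (x i * max (p i) 0 ^ 2 + (1 - ∑ i, x i) * max (-(p i)) 0 ^ 2)
          + b * ∑ i, (x i * max (q i) 0 ^ 2 + (1 - ∑ i, x i) * max (-(q i)) 0 ^ 2) := by
    rw [Finset.mul_sum, Finset.mul_sum, ← Finset.sum_add_distrib]
    refine Finset.sum_lt_sum (fun i _ => ?_) ⟨k, Finset.mem_univ k, ?_⟩
    · have e : (a • p + b • q) i = a * p i + b * q i := by
        simp [Pi.add_apply, Pi.smul_apply, smul_eq_mul]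
      rw [e]
      have h1 := lemA (p i) (q i) a b ha.le hb.le hab
      have h2 := lemA (-(p i)) (-(q i)) a b ha.le hb.le hab
      have e2 : -(a * p i + b * q i) = a * -(p i) + b * -(q i) := by ring
      rw [e2]
      have t1 := mul_le_mul_of_nonneg_left h1 (hx i).le
      have t2 := mul_le_mul_of_nonneg_left h2 hS1.le
      linarith
    · have e : (a • p + b • q) k = a * p k + b * q k := by
        simp [Pi.add_apply, Pi.smul_apply, smul_eq_mul]
      rw [e]
      exact lemB (x k) (1 - ∑ i, x i) (p k) (q k) a b (hx k) hS1 hk ha hb hab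
  rw [hrep, hrep, hrep]
  linarith

end
end

section
/- The function 𝓗(x,z) defined with Hamiltonians Ĥ^i in the previous context can be written as the sum of a concave function of z and the function z ↦ −(1/2) min(min_{i≤d−1} x_i, 1−∑_{i≤d−1} x_i) ∑_{i=1}^{d−1} z_i^2; in particular it is strictly concave in z whenever x lies in the interior of Ŝ_d. -/
open Set

noncomputable section

/-!
Since `t₊² + (−t)₊² = t²`, adding `c/2 ∑ zᵢ²` with `c = min(minᵢ xᵢ, x^{−d})` amounts to moving
weight `c` from each coefficient of `(zᵢ)₊²` (which is `xᵢ`) and of `(−zᵢ)₊²` (which is `x^{−d}`)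
onto `zᵢ²`. The coefficients stay nonnegative, so `−𝓗(x,·) − c/2 ∑ zᵢ²` remains a nonnegative
combination of squared positive parts of linear forms, hence convex. In the interior of `Ŝ_d`
we have `c > 0`, and the strictly concave term `−c/2 ∑ zᵢ²` makes `𝓗(x,·)` strictly concave.
-/

lemma max_zero_sq_add_max_neg_zero_sq (t : ℝ) : max t 0 ^ 2 + max (-t) 0 ^ 2 = t ^ 2 := by
  rcases le_total t 0 with h | h
  · rw [max_eq_right h, max_eq_left (neg_nonneg.mpr h)]; ring
  · rw [max_eq_left h, max_eq_right (neg_nonpos.mpr h)]; ring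

lemma convexOn_max_zero_sq_comp {E : Type*} [AddCommGroup E] [Module ℝ E] (f : E →ₗ[ℝ] ℝ) :
    ConvexOn ℝ univ fun z => max (f z) 0 ^ 2 := by
  have hpos : ConvexOn ℝ univ fun t : ℝ => max t 0 :=
    (convexOn_id convex_univ).sup (convexOn_const 0 convex_univ)
  exact (hpos.pow (fun t _ => le_max_right t 0) 2).comp_linearMap f

lemma convexOn_finset_sum {E ι : Type*} [AddCommGroup E] [Module ℝ E] {s : Set E}
    (hs : Convex ℝ s) (t : Finset ι) {f : ι → E → ℝ} (hf : ∀ i ∈ t, ConvexOn ℝ s (f i)) :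
    ConvexOn ℝ s fun z => ∑ i ∈ t, f i z := by
  classical
  induction t using Finset.induction_on with
  | empty => simpa using convexOn_const 0 hs
  | insert a t ha ih =>
    simp only [Finset.sum_insert ha]
    exact (hf a (t.mem_insert_self a)).add (ih fun i hi => hf i (Finset.mem_insert_of_mem hi))

lemma strictConvexOn_const_mul_sum_sq {ι : Type*} [Fintype ι] {c : ℝ} (hc : 0 < c) :
    StrictConvexOn ℝ univ fun z : ι → ℝ => c * ∑ i, z i ^ 2 := by
  refine ⟨convex_univ, fun z _ w _ hzw a b ha hb hab => ?_⟩
  obtain ⟨k, hk⟩ := Function.ne_iff.mp hzw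
  have hgap : ∀ u v : ℝ, a * u ^ 2 + b * v ^ 2 - (a * u + b * v) ^ 2 = a * b * (u - v) ^ 2 := by
    intro u v; linear_combination (-(a * u ^ 2 + b * v ^ 2)) * hab
  have hsum : ∑ i, (a * z i + b * w i) ^ 2 < ∑ i, (a * z i ^ 2 + b * w i ^ 2) := by
    refine Finset.sum_lt_sum (fun i _ => ?_) ⟨k, Finset.mem_univ k, ?_⟩
    · nlinarith [hgap (z i) (w i), mul_nonneg (mul_nonneg ha.le hb.le) (sq_nonneg (z i - w i))]
    · nlinarith [hgap (z k) (w k), mul_pos (mul_pos ha hb) (sq_pos_of_ne_zero (sub_ne_zero.mpr hk))]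
  simp only [smul_eq_mul, Pi.add_apply, Pi.smul_apply]
  rw [Finset.sum_add_distrib, ← Finset.mul_sum, ← Finset.mul_sum] at hsum
  nlinarith [mul_lt_mul_of_pos_left hsum hc]

lemma hamCal_add_half_mul_sum_sq (n : ℕ) (x z : Fin n → ℝ) (c : ℝ) :
    hamCal n x z + 1 / 2 * c * ∑ i, z i ^ 2 =
      -(1 / 2) * ∑ i, (x i * ∑ j ∈ Finset.univ.erase i, max (z i - z j) 0 ^ 2
        + (x i - c) * max (z i) 0 ^ 2 + (1 - ∑ j, x j - c) * max (-z i) 0 ^ 2) := by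
  simp only [hamCal, hamHatI, hamHatD, Finset.mul_sum, ← Finset.sum_add_distrib]
  refine Finset.sum_congr rfl fun i _ => ?_
  rw [← Finset.mul_sum]
  linear_combination (-(1 / 2) * c) * max_zero_sq_add_max_neg_zero_sq (z i)

lemma concaveOn_hamCal_add_half_mul_sum_sq {n : ℕ} {x : Fin n → ℝ} {c : ℝ} (hx : ∀ i, 0 ≤ x i)
    (hcx : ∀ i, c ≤ x i) (hcS : c ≤ 1 - ∑ i, x i) :
    ConcaveOn ℝ univ fun z => hamCal n x z + 1 / 2 * c * ∑ i, z i ^ 2 := by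
  let proj : Fin n → (Fin n → ℝ) →ₗ[ℝ] ℝ := fun i => LinearMap.proj i
  have hconvex : ConvexOn ℝ univ fun z : Fin n → ℝ =>
      ∑ i, (x i * ∑ j ∈ Finset.univ.erase i, max (z i - z j) 0 ^ 2
        + (x i - c) * max (z i) 0 ^ 2 + (1 - ∑ j, x j - c) * max (-z i) 0 ^ 2) :=
    convexOn_finset_sum convex_univ _ fun i _ =>
      (((convexOn_finset_sum convex_univ _ fun j _ =>
        convexOn_max_zero_sq_comp (proj i - proj j)).smul (hx i)).add
      ((convexOn_max_zero_sq_comp (proj i)).smul (sub_nonneg.2 (hcx i)))).add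
      ((convexOn_max_zero_sq_comp (-proj i)).smul (by linarith))
  refine (hconvex.smul (by norm_num : (0 : ℝ) ≤ 1 / 2)).neg.congr fun z _ => ?_
  rw [Pi.neg_apply, hamCal_add_half_mul_sum_sq, smul_eq_mul, neg_mul]

theorem hamiltonian_concave_decomposition_general
    (n : ℕ) (x : Fin n → ℝ)
    (hx : ∀ i, 0 ≤ x i) :
    (∃ φ : (Fin n → ℝ) → ℝ, ConcaveOn ℝ Set.univ φ ∧
      ∀ z : Fin n → ℝ,
        hamCal n x z
          = φ z - (1 / 2) * min (⨅ i, x i) (1 - ∑ i, x i) * ∑ i, z i ^ 2)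
    ∧ ((∀ i, 0 < x i) → ∑ i, x i < 1 →
        StrictConcaveOn ℝ Set.univ (fun z : Fin n → ℝ => hamCal n x z)) := by
  set c := min (⨅ i, x i) (1 - ∑ i, x i)
  have hcx : ∀ i, c ≤ x i := fun i =>
    (min_le_left _ _).trans (ciInf_le (Finite.bddBelow_range x) i)
  have hconcave := concaveOn_hamCal_add_half_mul_sum_sq hx hcx (min_le_right _ _)
  refine ⟨⟨_, hconcave, fun z => by ring⟩, fun hxpos hxsum => ?_⟩
  cases isEmpty_or_nonempty (Fin n)
  · exact ⟨convex_univ, fun z _ w _ hzw => absurd (Subsingleton.elim z w) hzw⟩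
  obtain ⟨i, hi⟩ := exists_eq_ciInf_of_finite (f := x)
  have hcpos : 0 < c := lt_min (hi ▸ hxpos i) (sub_pos.2 hxsum)
  refine (hconcave.add_strictConcaveOn (strictConvexOn_const_mul_sum_sq (half_pos hcpos)).neg).congr
    fun z _ => ?_
  simp only [Pi.add_apply, Pi.neg_apply]
  ring

/-- `𝓗(x,·)` is the sum of a concave function and of
`z ↦ −(1/2) min(min_i x_i, 1 − ∑ x_i) ∑ z_i²`; in particular it is strictly concave in `z`
whenever `x` lies in the interior of `Ŝ_d`.  Here `n = d−1 ≥ 1`. -/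
theorem hamiltonian_concave_decomposition
    (n : ℕ) (hn : 1 ≤ n) (x : Fin n → ℝ)
    (hx : ∀ i, 0 ≤ x i) (hxs : ∑ i, x i ≤ 1) :
    (∃ φ : (Fin n → ℝ) → ℝ, ConcaveOn ℝ Set.univ φ ∧
      ∀ z : Fin n → ℝ,
        hamCal n x z
          = φ z - (1 / 2) * min (⨅ i, x i) (1 - ∑ i, x i) * ∑ i, z i ^ 2)
    ∧ ((∀ i, 0 < x i) → ∑ i, x i < 1 →
        StrictConcaveOn ℝ Set.univ (fun z : Fin n → ℝ => hamCal n x z)) :=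
  hamiltonian_concave_decomposition_general n x hx

end
end

section
/- Perturbed supersolution lemma: let v be a Lipschitz viscosity supersolution of ∂_t V + 𝓗_{2R}(x,D_xV) + F̂ = 0 on [0,T)×Int(Ŝ_d), where 𝓗_{2R} is concave in z and satisfies ⟨D_z𝓗_{2R}(x,z), Dρ_i(x)⟩ ≥ −C_R ρ_i(x) for all i, x, z with C_R = 2R(d−1). For h ∈ (0, 1/(dC_R)], define v_h(t,x) := v(t,x) − h²∑_{i=1}^d ln(ρ_i(x)) + h(T−t). Then v_h is a viscosity supersolution of the same equation on [0,T)×Int(Ŝ_d). -/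
open Set

noncomputable section

/-- The closed set `Ŝ_d = {x ∈ ℝ₊^{d−1} : ∑ x_i ≤ 1}` (local coordinates on the simplex);
here `n = d − 1`. -/
def shat (n : ℕ) : Set (Fin n → ℝ) := {x | (∀ i, 0 ≤ x i) ∧ ∑ i, x i ≤ 1}

/-- The interior `Int(Ŝ_d) = {x : ∀ i, x_i > 0, ∑ x_i < 1}`. -/
def shatInt (n : ℕ) : Set (Fin n → ℝ) := {x | (∀ i, 0 < x i) ∧ ∑ i, x i < 1}

/-- The spatial gradient `D_xψ(t,x)` of a test function, as a vector of partial
derivatives. -/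
def spaceGrad (n : ℕ) (ψ : ℝ × (Fin n → ℝ) → ℝ) (t : ℝ) (x : Fin n → ℝ) :
    Fin n → ℝ :=
  fun i => fderiv ℝ (fun y => ψ (t, y)) x (Pi.single i 1)

/-- Viscosity subsolution on `[0,T) × Int(Ŝ_d)` of
`∂_t V + H(x, D_xV) + F̂(x) = 0` (no boundary condition): at every local maximum point
`(t̄,x̄) ∈ [0,T) × Int(Ŝ_d)` of `u − ψ` (relative to `[0,T) × Int(Ŝ_d)`), for `ψ` a `C¹`
test function, `−∂_tψ(t̄,x̄) − H(x̄, D_xψ(t̄,x̄)) − F̂(x̄) ≤ 0`. -/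
def IsViscSubsolution (n : ℕ) (T : ℝ)
    (H : (Fin n → ℝ) → (Fin n → ℝ) → ℝ) (Fh : (Fin n → ℝ) → ℝ)
    (u : ℝ → (Fin n → ℝ) → ℝ) : Prop :=
  ∀ ψ : ℝ × (Fin n → ℝ) → ℝ, ContDiff ℝ 1 ψ →
    ∀ t : ℝ, ∀ x : Fin n → ℝ, t ∈ Set.Ico (0:ℝ) T → x ∈ shatInt n →
      IsLocalMaxOn (fun q : ℝ × (Fin n → ℝ) => u q.1 q.2 - ψ q)
        (Set.Ico (0:ℝ) T ×ˢ shatInt n) (t, x) →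
      -(deriv (fun s => ψ (s, x)) t) - H x (spaceGrad n ψ t x) - Fh x ≤ 0

/-- Viscosity supersolution on `[0,T) × Int(Ŝ_d)` of
`∂_t V + H(x, D_xV) + F̂(x) = 0` (no boundary condition). -/
def IsViscSupersolution (n : ℕ) (T : ℝ)
    (H : (Fin n → ℝ) → (Fin n → ℝ) → ℝ) (Fh : (Fin n → ℝ) → ℝ)
    (u : ℝ → (Fin n → ℝ) → ℝ) : Prop :=
  ∀ ψ : ℝ × (Fin n → ℝ) → ℝ, ContDiff ℝ 1 ψ →
    ∀ t : ℝ, ∀ x : Fin n → ℝ, t ∈ Set.Ico (0:ℝ) T → x ∈ shatInt n →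
      IsLocalMinOn (fun q : ℝ × (Fin n → ℝ) => u q.1 q.2 - ψ q)
        (Set.Ico (0:ℝ) T ×ˢ shatInt n) (t, x) →
      0 ≤ -(deriv (fun s => ψ (s, x)) t) - H x (spaceGrad n ψ t x) - Fh x

/-!
Testing `v_h` with `ψ` is the same as testing `v` with `φ = ψ + h² L + h (t - T)`, where
`L = ∑ᵢ ln ρᵢ`. Since `L` is smooth only on `Int(Ŝ_d)`, `φ` is a test function only near the
contact point; this suffices, because a bump function turns it into a global `C¹` function
with the same germ. Passing from `φ` to `ψ` adds `h` to the time derivative and moves the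
gradient by `h² ∇L`, where `∂ᵢL = 1/xᵢ - 1/(1 - ∑ x)`. By concavity, `H` then changes by at most
`-h² ⟨D_zH, ∇L⟩`, and the bounds `⟨D_zH, Dρᵢ⟩ ≥ -C_R ρᵢ` make this at most
`h² d C_R ≤ h`.
-/

open Filter Topology

theorem ConcaveOn.le_add_of_hasFDerivAt {E : Type*} [NormedAddCommGroup E] [NormedSpace ℝ E]
    {s : Set E} {f : E → ℝ} {f' : E →L[ℝ] ℝ} {a b : E} (hf : ConcaveOn ℝ s f)
    (ha : a ∈ s) (hb : b ∈ s) (hfa : HasFDerivAt f f' a) :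
    f b ≤ f a + f' (b - a) := by
  have hline : ConcaveOn ℝ ((AffineMap.lineMap a b : ℝ → E) ⁻¹' s) (f ∘ AffineMap.lineMap a b) :=
    hf.comp_affineMap (AffineMap.lineMap a b)
  have hfa' : HasFDerivAt f f' (AffineMap.lineMap a b (0 : ℝ)) := by
    rwa [AffineMap.lineMap_apply_zero]
  have hderiv : HasDerivAt (f ∘ (AffineMap.lineMap a b : ℝ → E)) (f' (b - a)) 0 :=
    hfa'.comp_hasDerivAt 0 AffineMap.hasDerivAt_lineMap
  have := hline.slope_le_of_hasDerivAt (by simpa using ha) (by simpa using hb) one_pos hderiv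
  simp only [slope, Function.comp_apply, AffineMap.lineMap_apply_one,
    AffineMap.lineMap_apply_zero, sub_zero, inv_one, vsub_eq_sub, smul_eq_mul] at this
  linarith

theorem exists_contDiff_eventuallyEq {E F : Type*} [NormedAddCommGroup E] [NormedSpace ℝ E]
    [HasContDiffBump E] [NormedAddCommGroup F] [NormedSpace ℝ F] {k : ℕ∞}
    {f : E → F} {x : E} (hf : ∀ᶠ y in 𝓝 x, ContDiffAt ℝ k f y) :
    ∃ g : E → F, ContDiff ℝ k g ∧ g =ᶠ[𝓝 x] f := by
  obtain ⟨r, hr, hball⟩ := Metric.eventually_nhds_iff_ball.1 hf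
  let b : ContDiffBump x := ⟨r / 4, r / 2, by positivity, by linarith⟩
  refine ⟨fun y => b y • f y, contDiff_iff_contDiffAt.2 fun y => ?_, ?_⟩
  · by_cases hy : y ∈ Metric.ball x r
    · exact b.contDiffAt.smul (hball y hy)
    · have hyb : y ∉ tsupport b := by
        rw [b.tsupport_eq, Metric.mem_closedBall, not_le]
        rw [Metric.mem_ball, not_lt] at hy
        change r / 2 < dist y x
        linarith
      refine (contDiffAt_const (c := (0 : F))).congr_of_eventuallyEq ?_
      filter_upwards [notMem_tsupport_iff_eventuallyEq.1 hyb] with z hz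
      simp [hz]
  · filter_upwards [b.eventuallyEq_one] with y hy
    simp [hy]

theorem ContinuousLinearMap.apply_eq_sum_mul_apply_single {ι : Type*} [Fintype ι]
    [DecidableEq ι] (f : (ι → ℝ) →L[ℝ] ℝ) (w : ι → ℝ) :
    f w = ∑ i, w i * f (Pi.single i 1) := by
  conv_lhs => rw [← Finset.univ_sum_single w]
  refine (map_sum f _ _).trans (Finset.sum_congr rfl fun i _ => ?_)
  rw [← smul_eq_mul, ← map_smul, ← Pi.single_smul', smul_eq_mul, mul_one]

theorem isOpen_shatInt (n : ℕ) : IsOpen (shatInt n) := by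
  simp only [shatInt, Set.ofPred_and, Set.ofPred_forall]
  exact (isOpen_iInter_of_finite fun i => isOpen_lt continuous_const (continuous_apply i)).inter
    (isOpen_lt (continuous_finsetSum _ fun i _ => continuous_apply i) continuous_const)

theorem IsViscSupersolution.of_eventually_contDiffAt {n : ℕ} {T : ℝ}
    {H : (Fin n → ℝ) → (Fin n → ℝ) → ℝ} {Fh : (Fin n → ℝ) → ℝ} {v : ℝ → (Fin n → ℝ) → ℝ}
    (hv : IsViscSupersolution n T H Fh v) {φ : ℝ × (Fin n → ℝ) → ℝ} {t : ℝ} {x : Fin n → ℝ}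
    (hφ : ∀ᶠ q in 𝓝 (t, x), ContDiffAt ℝ 1 φ q) (ht : t ∈ Set.Ico 0 T) (hx : x ∈ shatInt n)
    (hmin : IsLocalMinOn (fun q : ℝ × (Fin n → ℝ) => v q.1 q.2 - φ q)
      (Set.Ico 0 T ×ˢ shatInt n) (t, x)) :
    0 ≤ -(deriv (fun s => φ (s, x)) t) - H x (spaceGrad n φ t x) - Fh x := by
  obtain ⟨g, hg, hgφ⟩ := exists_contDiff_eventuallyEq hφ
  have hvg : (fun q : ℝ × (Fin n → ℝ) => v q.1 q.2 - φ q) =ᶠ[𝓝 (t, x)]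
      fun q => v q.1 q.2 - g q :=
    hgφ.mono fun q hq => by simp [hq]
  have hmin' := hmin.congr (hvg.filter_mono nhdsWithin_le_nhds) ⟨ht, hx⟩
  have htime : deriv (fun s => g (s, x)) t = deriv (fun s => φ (s, x)) t :=
    (hgφ.comp_tendsto ((Continuous.prodMk_left x).tendsto t)).deriv_eq
  have hspace : spaceGrad n g t x = spaceGrad n φ t x := by
    have := (hgφ.comp_tendsto ((Continuous.prodMk_right t).tendsto x)).fderiv_eq (𝕜 := ℝ)
    funext i
    exact congrArg (· (Pi.single i 1)) this
  simpa [htime, hspace] using hv g hg t x ht hx hmin'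

-- `∑_{i=1}^d ln ρᵢ(y)`, with `ρ_d(y) = (1 - ∑ y) / √n`.
def logBarrier (n : ℕ) (y : Fin n → ℝ) : ℝ :=
  ∑ i, Real.log (y i) + Real.log ((1 - ∑ l, y l) / Real.sqrt n)

def barrierGrad {n : ℕ} (x : Fin n → ℝ) : Fin n → ℝ :=
  fun i => (x i)⁻¹ - (1 - ∑ l, x l)⁻¹

theorem contDiffAt_logBarrier {n : ℕ} (hn : n ≠ 0) {k : WithTop ℕ∞} {y : Fin n → ℝ}
    (hy : y ∈ shatInt n) : ContDiffAt ℝ k (logBarrier n) y := by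
  have hσ : (1 - ∑ l, y l) / Real.sqrt n ≠ 0 :=
    div_ne_zero (sub_ne_zero.2 hy.2.ne') (by positivity)
  exact (ContDiffAt.sum fun i _ => (contDiff_apply ℝ ℝ i).contDiffAt.log (hy.1 i).ne').add
    (ContDiffAt.log (by fun_prop) hσ)

theorem fderiv_logBarrier_single {n : ℕ} (hn : n ≠ 0) {x : Fin n → ℝ} (hx : x ∈ shatInt n)
    (i : Fin n) : fderiv ℝ (logBarrier n) x (Pi.single i 1) = barrierGrad x i := by
  have hσ : 1 - ∑ l, x l ≠ 0 := sub_ne_zero.2 hx.2.ne'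
  have hsqrt : Real.sqrt n ≠ 0 := by positivity
  have hlast := ((HasFDerivAt.fun_sum fun j _ => hasFDerivAt_apply (𝕜 := ℝ) j x).const_sub 1
    |>.mul_const (Real.sqrt n)⁻¹).log (mul_ne_zero hσ (inv_ne_zero hsqrt))
  simp only [← div_eq_mul_inv] at hlast
  have hd : HasFDerivAt (logBarrier n) _ x := (HasFDerivAt.fun_sum (u := Finset.univ) fun j _ =>
    (hasFDerivAt_apply (𝕜 := ℝ) j x).log (hx.1 j).ne').fun_add hlast
  rw [hd.fderiv]
  simp only [add_apply, sum_apply, smul_apply, neg_apply,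
    ContinuousLinearMap.proj_apply,
    Pi.single_apply, smul_eq_mul, mul_ite, mul_one, mul_zero, smul_neg, Finset.sum_ite_eq',
    Finset.mem_univ, if_true, barrierGrad]
  field_simp
  ring

theorem neg_le_sum_barrierGrad_mul {n : ℕ} {x D : Fin n → ℝ} (hx : x ∈ shatInt n) {C : ℝ}
    (hD : ∀ i, -C * x i ≤ D i) (hsum : ∑ i, D i ≤ C * (1 - ∑ l, x l)) :
    -((n + 1) * C) ≤ ∑ i, barrierGrad x i * D i := by
  have hσ : 0 < 1 - ∑ l, x l := sub_pos.2 hx.2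
  have hterm : ∀ i, -C ≤ (x i)⁻¹ * D i := fun i => by
    rw [le_inv_mul_iff₀ (hx.1 i)]; linarith [hD i]
  have hlast : (1 - ∑ l, x l)⁻¹ * ∑ i, D i ≤ C := by
    rw [inv_mul_le_iff₀ hσ]; linarith
  calc -((n + 1) * C) = ∑ _i : Fin n, -C - C := by
        simp only [Finset.sum_const, Finset.card_univ, Fintype.card_fin, nsmul_eq_mul]; ring
    _ ≤ ∑ i, (x i)⁻¹ * D i - (1 - ∑ l, x l)⁻¹ * ∑ i, D i := by
      gcongr with i _; exact hterm i
    _ = ∑ i, barrierGrad x i * D i := by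
      simp only [barrierGrad, sub_mul, Finset.sum_sub_distrib, Finset.mul_sum]

section TestFunction

variable {n : ℕ} {ψ : ℝ × (Fin n → ℝ) → ℝ} {a : (Fin n → ℝ) → ℝ} {b : ℝ → ℝ}
  {t : ℝ} {x : Fin n → ℝ}

theorem deriv_add_comp_fst (hψ : DifferentiableAt ℝ ψ (t, x)) (hb : DifferentiableAt ℝ b t) :
    deriv (fun s => ψ (s, x) + a x + b s) t = deriv (fun s => ψ (s, x)) t + deriv b t := by
  have hψt : DifferentiableAt ℝ (fun s => ψ (s, x)) t := hψ.comp t (by fun_prop)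
  rw [deriv_fun_add (hψt.add_const _) hb, deriv_add_const]

theorem spaceGrad_add_comp_snd (hψ : DifferentiableAt ℝ ψ (t, x)) (ha : DifferentiableAt ℝ a x) :
    spaceGrad n (fun q => ψ q + a q.2 + b q.1) t x
      = spaceGrad n ψ t x + fun i => fderiv ℝ a x (Pi.single i 1) := by
  have hψx : DifferentiableAt ℝ (fun y => ψ (t, y)) x := hψ.comp x (by fun_prop)
  funext i
  simp only [spaceGrad, Pi.add_apply]
  rw [fderiv_add_const, fderiv_fun_add hψx ha, add_apply]

theorem contDiffAt_add_logBarrier (hn : n ≠ 0) (hψ : ContDiff ℝ 1 ψ) (c : ℝ)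
    (hb : ContDiff ℝ 1 b) {q : ℝ × (Fin n → ℝ)} (hq : q.2 ∈ shatInt n) :
    ContDiffAt ℝ 1 (fun q => ψ q + c * logBarrier n q.2 + b q.1) q :=
  (hψ.contDiffAt.add ((contDiffAt_const.mul (contDiffAt_logBarrier hn hq)).comp q
    contDiffAt_snd)).add (hb.contDiffAt.comp q contDiffAt_fst)

theorem spaceGrad_add_logBarrier (hn : n ≠ 0) (hψ : DifferentiableAt ℝ ψ (t, x))
    (hx : x ∈ shatInt n) (c : ℝ) :
    spaceGrad n (fun q => ψ q + c * logBarrier n q.2 + b q.1) t x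
      = spaceGrad n ψ t x + c • barrierGrad x := by
  have hL : DifferentiableAt ℝ (logBarrier n) x :=
    (contDiffAt_logBarrier hn hx).differentiableAt one_ne_zero
  refine (spaceGrad_add_comp_snd hψ (hL.const_mul c)).trans (funext fun i => ?_)
  rw [Pi.add_apply, fderiv_const_mul hL, smul_apply, fderiv_logBarrier_single hn hx]
  rfl

end TestFunction

theorem ConcaveOn.le_add_smul_barrierGrad {n : ℕ} (hn : n ≠ 0) {x : Fin n → ℝ}
    (hx : x ∈ shatInt n) {G : (Fin n → ℝ) → ℝ} (hG : ConcaveOn ℝ Set.univ G)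
    (hGd : Differentiable ℝ G) {C : ℝ} (hD : ∀ z i, -C * x i ≤ fderiv ℝ G z (Pi.single i 1))
    (hDd : ∀ z, -C * ((1 - ∑ l, x l) / Real.sqrt n)
      ≤ (∑ i, fderiv ℝ G z (Pi.single i 1)) * (-(1 / Real.sqrt n)))
    (p : Fin n → ℝ) {ε : ℝ} (hε : 0 ≤ ε) :
    G p ≤ G (p + ε • barrierGrad x) + ε * ((n + 1) * C) := by
  have hsum : ∀ z, ∑ i, fderiv ℝ G z (Pi.single i 1) ≤ C * (1 - ∑ l, x l) := fun z => by
    have := hDd z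
    rwa [mul_neg, mul_one_div, neg_mul, mul_div_assoc', neg_le_neg_iff,
      div_le_div_iff_of_pos_right (by positivity)] at this
  set z := p + ε • barrierGrad x
  have htan := hG.le_add_of_hasFDerivAt (Set.mem_univ z) (Set.mem_univ p) (hGd z).hasFDerivAt
  have hpz : p - z = -ε • barrierGrad x := by simp [z]
  rw [hpz, ContinuousLinearMap.apply_eq_sum_mul_apply_single] at htan
  simp only [Pi.smul_apply, smul_eq_mul, neg_mul, mul_assoc, Finset.sum_neg_distrib,
    ← Finset.mul_sum] at htan
  nlinarith [neg_le_sum_barrierGrad_mul hx (hD z) (hsum z)]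

theorem sq_mul_le_of_le_one_div {h A : ℝ} (hh : 0 ≤ h) (hA : h ≤ 1 / A) : h ^ 2 * A ≤ h := by
  rcases le_or_gt A 0 with hA0 | hA0
  · nlinarith
  · nlinarith [(le_div_iff₀ hA0).1 hA]

theorem perturbed_supersolution_general
    (n : ℕ) (hn : 1 ≤ n) (T R : ℝ)
    (H : (Fin n → ℝ) → (Fin n → ℝ) → ℝ) (Fh : (Fin n → ℝ) → ℝ)
    (hHdiff : ∀ x, Differentiable ℝ (H x))
    (hHconc : ∀ x ∈ shatInt n, ConcaveOn ℝ Set.univ (H x))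
    (hHrho : ∀ x ∈ shatInt n, ∀ z : Fin n → ℝ, ∀ i : Fin n,
      -(2 * R * (n : ℝ)) * x i ≤ fderiv ℝ (H x) z (Pi.single i 1))
    (hHrhoD : ∀ x ∈ shatInt n, ∀ z : Fin n → ℝ,
      -(2 * R * (n : ℝ)) * ((1 - ∑ l, x l) / Real.sqrt n)
        ≤ (∑ j, fderiv ℝ (H x) z (Pi.single j 1)) * (-(1 / Real.sqrt n)))
    (v : ℝ → (Fin n → ℝ) → ℝ)
    (hsuper : IsViscSupersolution n T H Fh v)
    (h : ℝ) (hh0 : 0 < h) (hh1 : h ≤ 1 / (((n : ℝ) + 1) * (2 * R * (n : ℝ)))) :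
    IsViscSupersolution n T H Fh
      (fun t x =>
        v t x
          - h ^ 2 * ((∑ i, Real.log (x i)) + Real.log ((1 - ∑ l, x l) / Real.sqrt n))
          + h * (T - t)) := by
  intro ψ hψ t x ht hx hmin
  have hn0 : n ≠ 0 := by omega
  have hψd : DifferentiableAt ℝ ψ (t, x) := hψ.differentiable one_ne_zero (t, x)
  set φ : ℝ × (Fin n → ℝ) → ℝ := fun q => ψ q + h ^ 2 * logBarrier n q.2 + h * (q.1 - T)
  have hφ : ∀ᶠ q in 𝓝 (t, x), ContDiffAt ℝ 1 φ q :=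
    eventually_of_mem (((isOpen_shatInt n).preimage continuous_snd).mem_nhds hx) fun q hq =>
      contDiffAt_add_logBarrier hn0 hψ _ (b := fun s => h * (s - T)) (by fun_prop) hq
  have key := hsuper.of_eventually_contDiffAt hφ ht hx (by
    convert hmin using 2 with q
    simp only [φ, logBarrier]
    ring)
  have htime : deriv (fun s => φ (s, x)) t = deriv (fun s => ψ (s, x)) t + h := by
    refine (deriv_add_comp_fst (a := fun y => h ^ 2 * logBarrier n y) hψd
      (b := fun s => h * (s - T)) (by fun_prop)).trans ?_
    simp
  have hspace : spaceGrad n φ t x = spaceGrad n ψ t x + h ^ 2 • barrierGrad x :=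
    spaceGrad_add_logBarrier (b := fun s => h * (s - T)) hn0 hψd hx _
  rw [htime, hspace] at key
  have hHam := (hHconc x hx).le_add_smul_barrierGrad hn0 hx (hHdiff x) (hHrho x hx) (hHrhoD x hx)
    (spaceGrad n ψ t x) (sq_nonneg h)
  linarith [sq_mul_le_of_le_one_div hh0.le hh1]

/-- perturbed supersolution lemma.  Let `v` be a Lipschitz viscosity
supersolution on `[0,T) × Int(Ŝ_d)` of `∂_tV + H(x,D_xV) + F̂ = 0`, where `H` (playing the
role of the truncated Hamiltonian `𝓗_{2R}`) is differentiable and concave in `z` and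
satisfies `⟨D_zH(x,z), Dρ_i(x)⟩ ≥ −C_R ρ_i(x)` for all `i ∈ {1,…,d}`, `x ∈ Int(Ŝ_d)`,
`z ∈ ℝ^{d−1}`, with `C_R = 2R(d−1)` and `ρ_i(x) = x_i` (`i ≤ d−1`),
`ρ_d(x) = (1−∑x)/√(d−1)`.  Then for every `h ∈ (0, 1/(d·C_R)]`, the perturbation
`v_h(t,x) = v(t,x) − h²∑_{i=1}^d ln(ρ_i(x)) + h(T−t)` is again a viscosity supersolution
of the same equation.  Here `n = d−1 ≥ 1`. -/
theorem perturbed_supersolution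
    (n : ℕ) (hn : 1 ≤ n) (T R : ℝ) (hT : 0 < T) (hR : 0 < R)
    (H : (Fin n → ℝ) → (Fin n → ℝ) → ℝ) (Fh : (Fin n → ℝ) → ℝ)
    (hHdiff : ∀ x, Differentiable ℝ (H x))
    (hHconc : ∀ x ∈ shatInt n, ConcaveOn ℝ Set.univ (H x))
    (hHrho : ∀ x ∈ shatInt n, ∀ z : Fin n → ℝ, ∀ i : Fin n,
      -(2 * R * (n : ℝ)) * x i ≤ fderiv ℝ (H x) z (Pi.single i 1))
    (hHrhoD : ∀ x ∈ shatInt n, ∀ z : Fin n → ℝ,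
      -(2 * R * (n : ℝ)) * ((1 - ∑ l, x l) / Real.sqrt n)
        ≤ (∑ j, fderiv ℝ (H x) z (Pi.single j 1)) * (-(1 / Real.sqrt n)))
    (v : ℝ → (Fin n → ℝ) → ℝ) (K : NNReal)
    (hLip : LipschitzOnWith K (fun q : ℝ × (Fin n → ℝ) => v q.1 q.2)
      (Set.Ico (0:ℝ) T ×ˢ shatInt n))
    (hsuper : IsViscSupersolution n T H Fh v)
    (h : ℝ) (hh0 : 0 < h) (hh1 : h ≤ 1 / (((n : ℝ) + 1) * (2 * R * (n : ℝ)))) :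
    IsViscSupersolution n T H Fh
      (fun t x =>
        v t x
          - h ^ 2 * ((∑ i, Real.log (x i)) + Real.log ((1 - ∑ l, x l) / Real.sqrt n))
          + h * (T - t)) :=
  perturbed_supersolution_general n hn T R H Fh hHdiff hHconc hHrho hHrhoD v hsuper h hh0 hh1

end
end
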